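/- Let f ∈ ℂ[z₁,…,z_n] be a stable polynomial. Then for each j, the partial derivative ∂f/∂z_j is either identically zero or stable. -/

import Mathlib

/-!
Fix `z` in the upper half-space and restrict `f` to the line through `z` parallel to the
`j`-th axis. The resulting univariate polynomial `p` has no roots in the upper half-plane, so
`p'/p = ∑ 1/(t - r)` over its roots `r` has nonpositive imaginary part at `t = z j`. Hence
`v = ∂ⱼf / f` is holomorphic on the (connected, open) upper half-space with `Im v ≤ 0`. If
`∂ⱼf` vanishes at some point `a` there, `Im v` attains its maximum `0` at `a`; by the open
mapping theorem `v` is constant, so `∂ⱼf` vanishes on an open set and is the zero polynomial.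
-/

/-- A polynomial `f ∈ ℂ[z₁,…,zₙ]` is stable if it does not vanish whenever all
variables have positive imaginary part. -/
def MvStable {n : ℕ} (f : MvPolynomial (Fin n) ℂ) : Prop :=
  ∀ z : Fin n → ℂ, (∀ j, 0 < (z j).im) → MvPolynomial.eval z f ≠ 0

open Set

theorem Polynomial.im_eval_derivative_div_eval_nonpos {p : Polynomial ℂ}
    (hp : ∀ w : ℂ, 0 < w.im → p.eval w ≠ 0) {w : ℂ} (hw : 0 < w.im) :
    (p.derivative.eval w / p.eval w).im ≤ 0 := by
  rw [(IsAlgClosed.splits p).eval_derivative_div_eval_of_ne_zero (hp w hw),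
    ← Complex.coe_imAddGroupHom, map_multiset_sum, Multiset.map_map]
  refine (Multiset.sum_le_card_nsmul _ 0 ?_).trans (nsmul_zero _).le
  simp only [Multiset.mem_map, Function.comp_apply, Complex.coe_imAddGroupHom]
  rintro _ ⟨r, hr, rfl⟩
  have hr_im : r.im ≤ 0 := not_lt.mp fun h => hp r h (p.isRoot_of_mem_roots hr)
  rw [one_div, Complex.inv_im, Complex.sub_im]
  exact div_nonpos_of_nonpos_of_nonneg (by linarith) (Complex.normSq_nonneg _)

theorem AnalyticOnNhd.eqOn_of_isMaxOn_im {E : Type*} [NormedAddCommGroup E] [NormedSpace ℂ E]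
    {g : E → ℂ} {U : Set E} {a : E} (hg : AnalyticOnNhd ℂ g U) (hU : IsPreconnected U)
    (hU' : IsOpen U) (ha : a ∈ U) (hmax : IsMaxOn (fun z => (g z).im) U a) :
    EqOn g (fun _ => g a) U := by
  obtain ⟨w, hw⟩ | hopen := hg.is_constant_or_isOpen hU
  · intro z hz
    simp [hw z hz, hw a ha]
  obtain ⟨ε, hε, hball⟩ := Metric.isOpen_iff.mp (hopen U le_rfl hU') (g a) (mem_image_of_mem g ha)
  obtain ⟨z, hz, hgz⟩ := hball (show g a + (ε / 2 : ℝ) * Complex.I ∈ Metric.ball (g a) ε by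
    simp [abs_of_pos hε, hε])
  have := hmax hz
  simp [hgz] at this
  linarith

def upperHalfSpace (σ : Type*) : Set (σ → ℂ) :=
  univ.pi fun _ => {w : ℂ | 0 < w.im}

theorem mvStable_iff {n : ℕ} {f : MvPolynomial (Fin n) ℂ} :
    MvStable f ↔ ∀ z ∈ upperHalfSpace (Fin n), MvPolynomial.eval z f ≠ 0 := by
  simp [MvStable, upperHalfSpace]

theorem isOpen_upperHalfSpace {σ : Type*} [Finite σ] : IsOpen (upperHalfSpace σ) :=
  isOpen_set_pi finite_univ fun _ _ => Complex.isOpen_im_gt 0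

theorem convex_upperHalfSpace {σ : Type*} : Convex ℝ (upperHalfSpace σ) :=
  convex_pi fun _ _ => convex_halfSpace_im_gt 0

namespace MvPolynomial

section RestrictLine

variable {σ R : Type*} [CommSemiring R] [DecidableEq σ]

/-- The restriction of a polynomial to the line through `z` parallel to the `j`-th axis. -/
noncomputable def restrictLine (z : σ → R) (j : σ) : MvPolynomial σ R →ₐ[R] Polynomial R :=
  aeval (Function.update (Polynomial.C ∘ z) j Polynomial.X)

theorem eval_restrictLine (z : σ → R) (j : σ) (f : MvPolynomial σ R) (w : R) :
    (restrictLine z j f).eval w = eval (Function.update z j w) f := by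
  rw [← Polynomial.coe_aeval_eq_eval, restrictLine, ← AlgHom.comp_apply, comp_aeval,
    ← coe_aeval_eq_eval, RingHom.coe_coe]
  congr 2
  funext i
  rcases eq_or_ne i j with rfl | hij <;> simp [*]

theorem derivative_restrictLine (z : σ → R) (j : σ) (f : MvPolynomial σ R) :
    Polynomial.derivative (restrictLine z j f) = restrictLine z j (pderiv j f) := by
  induction f using MvPolynomial.induction_on with
  | C c => simp [restrictLine]
  | add p q hp hq => simp [hp, hq]
  | mul_X p i hp =>
    simp only [map_mul, Polynomial.derivative_mul, hp, pderiv_mul, map_add]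
    rcases eq_or_ne i j with rfl | hij <;> simp [restrictLine, pderiv_X, *]

end RestrictLine

theorem eq_zero_of_eval_eq_zero_on_isOpen {σ 𝕜 : Type*} [Fintype σ] [RCLike 𝕜]
    {p : MvPolynomial σ 𝕜} {U : Set (σ → 𝕜)} (hU : IsOpen U) (hU_ne : U.Nonempty)
    (hp : ∀ z ∈ U, eval z p = 0) : p = 0 := by
  obtain ⟨a, ha⟩ := hU_ne
  have := (AnalyticOnNhd.eval_mvPolynomial p).eqOn_zero_of_preconnected_of_eventuallyEq_zero
    isPreconnected_univ (mem_univ a) (Filter.eventuallyEq_of_mem (hU.mem_nhds ha) hp)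
  exact funext fun x => by simpa using this (mem_univ x)

theorem im_eval_pderiv_div_eval_nonpos {σ : Type*} [DecidableEq σ] {f : MvPolynomial σ ℂ}
    (hf : ∀ z ∈ upperHalfSpace σ, eval z f ≠ 0) (j : σ) {z : σ → ℂ}
    (hz : z ∈ upperHalfSpace σ) :
    (eval z (pderiv j f) / eval z f).im ≤ 0 := by
  have hline : ∀ w : ℂ, 0 < w.im → (restrictLine z j f).eval w ≠ 0 := fun w hw => by
    rw [eval_restrictLine]
    exact hf _ ((update_mem_pi_iff_of_mem hz).mpr fun _ => hw)
  simpa [derivative_restrictLine, eval_restrictLine] using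
    Polynomial.im_eval_derivative_div_eval_nonpos hline (hz j trivial)

end MvPolynomial

open MvPolynomial

theorem stmt6 (n : ℕ) (f : MvPolynomial (Fin n) ℂ) (hf : MvStable f) (j : Fin n) :
    MvPolynomial.pderiv j f = 0 ∨ MvStable (MvPolynomial.pderiv j f) := by
  rw [mvStable_iff] at hf
  rw [or_iff_not_imp_right, mvStable_iff]
  intro hg
  push Not at hg
  obtain ⟨a, ha, hga⟩ := hg
  have hv : AnalyticOnNhd ℂ (fun z => eval z (pderiv j f) / eval z f) (upperHalfSpace (Fin n)) :=
    ((AnalyticOnNhd.eval_mvPolynomial _).mono (subset_univ _)).div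
      ((AnalyticOnNhd.eval_mvPolynomial f).mono (subset_univ _)) hf
  have hmax : IsMaxOn (fun z => (eval z (pderiv j f) / eval z f).im) (upperHalfSpace (Fin n)) a :=
    fun z hz => by simpa [hga] using im_eval_pderiv_div_eval_nonpos hf j hz
  have hv_zero := hv.eqOn_of_isMaxOn_im convex_upperHalfSpace.isPreconnected
    isOpen_upperHalfSpace ha hmax
  refine eq_zero_of_eval_eq_zero_on_isOpen isOpen_upperHalfSpace ⟨a, ha⟩ fun z hz => ?_
  simpa [hga, hf z hz] using hv_zero hz
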